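/- Let Δ ∈ ℝ^{m×n} and let U_1 ∈ ℝ^{m×m}, U_2 ∈ ℝ^{n×n} be invertible matrices with singular values σ_1(U_k) ≥ ... ordered non-increasingly. Then ‖U_1⁻¹ Δ U_2⁻ᵀ‖_F² ≤ Σ_{i=1}^{r} σ_i(Δ)² / (σ_{m−i+1}(U_1)² σ_{n−i+1}(U_2)²), where r = min{m,n}. -/

import Mathlib

/-!
With `A = (U₁ U₁ᵀ)⁻¹` and `G = (U₂ U₂ᵀ)⁻¹`, the left-hand side is `tr (A · Δ G Δᵀ)`, and the
decreasingly ordered eigenvalues of `A` and `G` are `σ_{m-i+1}(U₁)⁻²` and `σ_{n-i+1}(U₂)⁻²`.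

Von Neumann's trace inequality `tr (A B) ≤ ∑ αᵢ βᵢ` (both spectra decreasing) holds because the
squared entries of the orthogonal matrix relating the two eigenbases form a doubly stochastic
matrix: by Birkhoff's theorem it is a convex combination of permutation matrices, and each of these
is handled by the rearrangement inequality. Since the eigenvalues of `A` are nonnegative and
decreasing, Abel summation reduces the claim to bounding the partial sums of the eigenvalues `βᵢ`
of `Δ G Δᵀ` by those of `dᵢ yᵢ`, where `d = σ(Δ)²` and `y` is the spectrum of `G`.

For the first `k` of them, let `P` project onto the top `k` eigenvectors of `Δ G Δᵀ`. Then
`∑_{i<k} βᵢ = tr (P Δ G Δᵀ) = tr (G · Δᵀ P Δ)`, and `Δᵀ P Δ` has rank at most `k` and lies below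
`Δᵀ Δ` in the Loewner order, so (Ky Fan) its eigenvalues have partial sums dominated by those of
`(d₁, …, d_k, 0, …)`. Von Neumann's inequality and Abel summation once more give
`∑_{i<k} βᵢ ≤ ∑_{i<k} dᵢ yᵢ`.
-/

open MeasureTheory ProbabilityTheory Filter Matrix

noncomputable def frob {m n : ℕ} (M : Matrix (Fin m) (Fin n) ℝ) : ℝ :=
  Real.sqrt (∑ i, ∑ j, (M i j)^2)

noncomputable def sv {m n : ℕ} (M : Matrix (Fin m) (Fin n) ℝ) : Fin n → ℝ :=
  fun i => Real.sqrt ((show (Mᵀ * M).IsHermitian by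
    simpa [Matrix.conjTranspose_eq_transpose_of_trivial] using
      Matrix.isHermitian_conjTranspose_mul_self M).eigenvalues i)

/-- `σ` is the non-increasingly ordered tuple of singular values of `M`. -/
def IsSVals {m n : ℕ} (M : Matrix (Fin m) (Fin n) ℝ) (σ : Fin n → ℝ) : Prop :=
  Antitone σ ∧ ∃ e : Equiv.Perm (Fin n), σ = sv M ∘ e

/-- Standard normal CDF. -/
noncomputable def Phi (t : ℝ) : ℝ :=
  (Real.sqrt (2 * Real.pi))⁻¹ * ∫ u in Set.Iic t, Real.exp (-u^2/2)

open Finset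

namespace Fin

-- Spectra of matrices of different sizes are compared termwise after padding them with zeros.
def padZero {α : Type*} [Zero α] {p : ℕ} (f : Fin p → α) (i : ℕ) : α :=
  if h : i < p then f ⟨i, h⟩ else 0

variable {α : Type*} {p : ℕ}

lemma padZero_of_lt [Zero α] {f : Fin p → α} {i : ℕ} (h : i < p) : padZero f i = f ⟨i, h⟩ :=
  dif_pos h

lemma padZero_of_le [Zero α] {f : Fin p → α} {i : ℕ} (h : p ≤ i) : padZero f i = 0 :=
  dif_neg h.not_gt

lemma padZero_val [Zero α] (f : Fin p → α) (i : Fin p) : padZero f i = f i :=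
  padZero_of_lt i.2

lemma padZero_castLE [Zero α] (f : Fin p → α) {k : ℕ} (h : k ≤ p) (i : Fin k) :
    padZero f i = f (Fin.castLE h i) :=
  padZero_of_lt _

lemma sum_univ_mul_eq_sum_range_padZero [CommSemiring α] (f g : Fin p → α) :
    ∑ i, f i * g i = ∑ i ∈ range p, padZero f i * padZero g i := by
  rw [← Fin.sum_univ_eq_sum_range (fun i => padZero f i * padZero g i)]
  simp only [padZero_val]

lemma padZero_nonneg [Zero α] [Preorder α] {f : Fin p → α} (hf : 0 ≤ f) : 0 ≤ padZero f := by
  intro i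
  unfold padZero
  split_ifs
  exacts [hf _, le_rfl]

lemma antitone_padZero [Zero α] [Preorder α] {f : Fin p → α} (hf : Antitone f) (hf0 : 0 ≤ f) :
    Antitone (padZero f) := by
  intro i j hij
  by_cases hj : j < p
  · rw [padZero_of_lt hj, padZero_of_lt (hij.trans_lt hj)]
    exact hf hij
  · rw [padZero_of_le (not_lt.1 hj)]
    exact padZero_nonneg hf0 i

lemma sum_range_padZero_mul_eq_min [CommSemiring α] (f : Fin p → α) (g : ℕ → α) (k : ℕ) :
    ∑ i ∈ range k, padZero f i * g i = ∑ i ∈ range (min k p), padZero f i * g i := by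
  refine (sum_subset (range_mono (min_le_left k p)) fun i hik hip => ?_).symm
  rw [padZero_of_le (by simp_all), zero_mul]

end Fin

open Fin

lemma Finset.sum_range_ite_lt {M : Type*} [AddCommMonoid M] (j k : ℕ) (g : ℕ → M) :
    ∑ i ∈ range j, (if i < k then g i else 0) = ∑ i ∈ range (min j k), g i := by
  rw [← sum_filter]
  congr 1
  ext i
  simp

theorem Finset.sum_range_mul_le_of_partialSums_le {p : ℕ} {w a b : ℕ → ℝ} (hw : Antitone w)
    (hw0 : ∀ i, 0 ≤ w i) (hab : ∀ k ≤ p, ∑ i ∈ range k, a i ≤ ∑ i ∈ range k, b i) :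
    ∑ i ∈ range p, w i * a i ≤ ∑ i ∈ range p, w i * b i := by
  have by_parts : ∀ f : ℕ → ℝ, ∑ i ∈ range p, w i * f i = w (p - 1) * ∑ i ∈ range p, f i
      - ∑ i ∈ range (p - 1), (w (i + 1) - w i) * ∑ j ∈ range (i + 1), f j := fun f => by
    simpa using sum_range_by_parts w f p
  rw [by_parts a, by_parts b]
  gcongr ?_ - ?_
  · exact mul_le_mul_of_nonneg_left (hab p le_rfl) (hw0 _)
  · refine sum_le_sum fun i hi => mul_le_mul_of_nonpos_left (hab _ ?_) ?_
    · have := mem_range.1 hi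
      omega
    · exact sub_nonpos.2 (hw (Nat.le_succ i))

namespace Matrix

lemma posSemidef_transpose_mul_self {m n : Type*} [Fintype m] [Fintype n] (M : Matrix m n ℝ) :
    (Mᵀ * M).PosSemidef := by
  simpa [conjTranspose_eq_transpose_of_trivial] using posSemidef_conjTranspose_mul_self M

section

variable {n : Type*} [Fintype n] [DecidableEq n]

def HasEigenDecomp (M : Matrix n n ℝ) (μ : n → ℝ) : Prop :=
  ∃ V ∈ orthogonalGroup n ℝ, M = V * diagonal μ * Vᵀ

lemma IsHermitian.hasEigenDecomp {M : Matrix n n ℝ} (hM : M.IsHermitian) :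
    M.HasEigenDecomp hM.eigenvalues := by
  refine ⟨hM.eigenvectorUnitary, hM.eigenvectorUnitary.2, ?_⟩
  simpa [star_eq_conjTranspose] using hM.spectral_theorem

lemma trace_conj_diagonal_mul_conj_diagonal {V : Matrix n n ℝ} (hV : V ∈ orthogonalGroup n ℝ)
    (W : Matrix n n ℝ) (α β : n → ℝ) :
    (V * diagonal α * Vᵀ * (W * diagonal β * Wᵀ)).trace
      = α ⬝ᵥ ((Vᵀ * W) ⊙ (Vᵀ * W)) *ᵥ β := by
  have hVV : V * Vᵀ = 1 := (mem_orthogonalGroup_iff _ _).1 hV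
  set Z := Vᵀ * W
  have hcyc : V * diagonal α * Vᵀ * (W * diagonal β * Wᵀ)
      = V * (diagonal α * Z * diagonal β * Zᵀ) * Vᵀ := by
    simp only [Z, transpose_mul, transpose_transpose, Matrix.mul_assoc, hVV, Matrix.mul_one]
  rw [hcyc, trace_mul_cycle, (mem_orthogonalGroup_iff' _ _).1 hV, Matrix.one_mul]
  refine sum_congr rfl fun i _ => ?_
  rw [diag_apply, mul_apply, mulVec, dotProduct, mul_sum]
  refine sum_congr rfl fun j _ => ?_
  rw [mul_diagonal, diagonal_mul, transpose_apply, hadamard_apply]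
  ring

lemma hadamard_self_mem_doublyStochastic {Z : Matrix n n ℝ} (hZ : Z ∈ orthogonalGroup n ℝ) :
    Z ⊙ Z ∈ doublyStochastic ℝ n := by
  have hrow := congrFun₂ ((mem_orthogonalGroup_iff _ _).1 hZ)
  have hcol := congrFun₂ ((mem_orthogonalGroup_iff' _ _).1 hZ)
  refine mem_doublyStochastic_iff_sum.2 ⟨fun i j => mul_self_nonneg _, fun i => ?_, fun j => ?_⟩
  · simpa [mul_apply] using hrow i i
  · simpa [mul_apply] using hcol j j

namespace HasEigenDecomp

variable {A B M : Matrix n n ℝ} {α β μ : n → ℝ}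

lemma posSemidef (h : M.HasEigenDecomp μ) (hμ : 0 ≤ μ) : M.PosSemidef := by
  obtain ⟨V, -, rfl⟩ := h
  simpa [conjTranspose_eq_transpose_of_trivial] using
    (PosSemidef.diagonal hμ).mul_mul_conjTranspose_same V

lemma comp_perm (h : M.HasEigenDecomp μ) (e : Equiv.Perm n) : M.HasEigenDecomp (μ ∘ e) := by
  obtain ⟨V, hV, rfl⟩ := h
  refine ⟨V.submatrix id e, (mem_orthogonalGroup_iff' _ _).2 ?_, ?_⟩
  · rw [transpose_submatrix, ← submatrix_mul _ _ _ _ _ Function.bijective_id,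
      (mem_orthogonalGroup_iff' _ _).1 hV, submatrix_one_equiv]
  · rw [← submatrix_diagonal_equiv, transpose_submatrix,
      submatrix_mul_equiv _ _ _ e, submatrix_mul_equiv _ _ _ e]
    rfl

lemma inv (h : M.HasEigenDecomp μ) (hμ : ∀ i, μ i ≠ 0) : M⁻¹.HasEigenDecomp μ⁻¹ := by
  obtain ⟨V, hV, rfl⟩ := h
  refine ⟨V, hV, inv_eq_right_inv ?_⟩
  have hdiag : diagonal μ * diagonal μ⁻¹ = 1 := by
    rw [diagonal_mul_diagonal, ← diagonal_one]
    exact congrArg diagonal (funext fun i => mul_inv_cancel₀ (hμ i))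
  calc V * diagonal μ * Vᵀ * (V * diagonal μ⁻¹ * Vᵀ)
      = V * (diagonal μ * (Vᵀ * V) * diagonal μ⁻¹) * Vᵀ := by simp only [Matrix.mul_assoc]
    _ = 1 := by
      rw [(mem_orthogonalGroup_iff' _ _).1 hV, Matrix.mul_one, hdiag, Matrix.mul_one,
        (mem_orthogonalGroup_iff _ _).1 hV]

lemma one_sub (h : M.HasEigenDecomp μ) : (1 - M).HasEigenDecomp (1 - μ) := by
  obtain ⟨V, hV, rfl⟩ := h
  refine ⟨V, hV, ?_⟩
  rw [show 1 - μ = fun i => 1 - μ i from rfl, ← diagonal_sub, diagonal_one, Matrix.mul_sub,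
    Matrix.sub_mul, Matrix.mul_one, (mem_orthogonalGroup_iff _ _).1 hV]

lemma rank_eq_card (h : M.HasEigenDecomp μ) : M.rank = Fintype.card {i // μ i ≠ 0} := by
  obtain ⟨V, hV, rfl⟩ := h
  have hVT : Vᵀ * V = 1 := (mem_orthogonalGroup_iff' _ _).1 hV
  rw [Matrix.mul_assoc, rank_mul_eq_right_of_isUnit_det _ _ (isUnit_det_of_left_inverse hVT),
    rank_mul_eq_left_of_isUnit_det _ _ (isUnit_det_of_right_inverse hVT), rank_diagonal]

lemma trace_mul_nonneg (hA : A.HasEigenDecomp α) (hα : 0 ≤ α) (hB : B.PosSemidef) :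
    0 ≤ (A * B).trace := by
  obtain ⟨V, -, rfl⟩ := hA
  have hC : (Vᵀ * B * V).PosSemidef := by
    simpa [conjTranspose_eq_transpose_of_trivial] using hB.conjTranspose_mul_mul_same V
  rw [Matrix.mul_assoc, trace_mul_cycle]
  simp only [trace, diag, mul_diagonal]
  exact sum_nonneg fun i _ => mul_nonneg hC.diag_nonneg (hα i)

theorem trace_mul_le_sum_mul (hA : A.HasEigenDecomp α) (hB : B.HasEigenDecomp β)
    (hαβ : Monovary α β) :
    (A * B).trace ≤ ∑ i, α i * β i := by
  obtain ⟨V, hV, rfl⟩ := hA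
  obtain ⟨W, hW, rfl⟩ := hB
  have hZ : Vᵀ * W ∈ orthogonalGroup n ℝ :=
    mul_mem (transpose_mem_unitaryGroup_iff.2 hV) hW
  obtain ⟨w, hw0, hw1, hS⟩ :=
    exists_eq_sum_perm_of_mem_doublyStochastic (hadamard_self_mem_doublyStochastic hZ)
  rw [trace_conj_diagonal_mul_conj_diagonal hV, ← hS]
  simp only [sum_mulVec, smul_mulVec, permMatrix_mulVec, dotProduct_sum, dotProduct_smul,
    smul_eq_mul]
  calc ∑ σ, w σ * (α ⬝ᵥ (β ∘ σ)) ≤ ∑ σ, w σ * ∑ i, α i * β i :=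
        sum_le_sum fun σ _ => mul_le_mul_of_nonneg_left hαβ.sum_mul_comp_perm_le_sum_mul (hw0 σ)
    _ = ∑ i, α i * β i := by rw [← sum_mul, hw1, one_mul]

end HasEigenDecomp

end

section

variable {p : ℕ}

def indicatorLT (p k : ℕ) : Fin p → ℝ := fun i => if (i : ℕ) < k then 1 else 0

lemma antitone_indicatorLT (p k : ℕ) : Antitone (indicatorLT p k) := by
  intro i j hij
  unfold indicatorLT
  split_ifs with hj hi <;> first | exact le_rfl | exact zero_le_one | omega

lemma indicatorLT_nonneg (p k : ℕ) : 0 ≤ indicatorLT p k := fun i => by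
  unfold indicatorLT; split_ifs <;> norm_num

lemma indicatorLT_le_one (p k : ℕ) : indicatorLT p k ≤ 1 := fun i => by
  unfold indicatorLT; split_ifs <;> norm_num

lemma card_indicatorLT_ne_zero_le (p k : ℕ) : Fintype.card {i // indicatorLT p k i ≠ 0} ≤ k := by
  have hlt (i : {i // indicatorLT p k i ≠ 0}) : (i : ℕ) < k := by
    by_contra h
    exact i.2 (if_neg h)
  simpa using Fintype.card_le_of_injective
    (fun i : {i // indicatorLT p k i ≠ 0} => (⟨i, hlt i⟩ : Fin k))
    fun i j hij => Subtype.ext (Fin.ext (Fin.mk.inj hij))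

lemma sum_indicatorLT_mul (k : ℕ) (f : Fin p → ℝ) :
    ∑ i, indicatorLT p k i * f i = ∑ i ∈ range (min p k), padZero f i := by
  rw [sum_univ_mul_eq_sum_range_padZero, ← sum_range_ite_lt]
  refine sum_congr rfl fun i hi => ?_
  rw [padZero_of_lt (mem_range.1 hi), indicatorLT]
  split_ifs <;> simp_all

lemma PosSemidef.exists_hasEigenDecomp_antitone {M : Matrix (Fin p) (Fin p) ℝ}
    (hM : M.PosSemidef) : ∃ μ, Antitone μ ∧ 0 ≤ μ ∧ M.HasEigenDecomp μ := by
  let e : Equiv.Perm (Fin p) := Fin.revPerm.trans (Tuple.sort hM.1.eigenvalues)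
  refine ⟨hM.1.eigenvalues ∘ e, fun i j hij => ?_, fun i => hM.eigenvalues_nonneg _,
    hM.1.hasEigenDecomp.comp_perm e⟩
  simpa [e] using Tuple.monotone_sort _ (Fin.rev_le_rev.2 hij)

namespace HasEigenDecomp

variable {A B M : Matrix (Fin p) (Fin p) ℝ} {α β μ : Fin p → ℝ}

lemma eq_zero_of_rank_le (h : M.HasEigenDecomp μ) (hμ : Antitone μ) (hμ0 : 0 ≤ μ) {k : ℕ}
    (hk : M.rank ≤ k) {i : Fin p} (hi : k ≤ i) : μ i = 0 := by
  by_contra hne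
  have hpos : 0 < μ i := (hμ0 i).lt_of_ne' hne
  have hcard : #(Iic i) ≤ Fintype.card {j // μ j ≠ 0} := by
    rw [Fintype.card_subtype]
    exact card_le_card fun j hj => mem_filter.2
      ⟨mem_univ j, (hpos.trans_le (hμ (mem_Iic.1 hj))).ne'⟩
  rw [Fin.card_Iic, ← h.rank_eq_card] at hcard
  omega

theorem trace_mul_le_of_partialSums_le {e : ℕ → ℝ} (hA : A.HasEigenDecomp α) (hα : Antitone α)
    (hα0 : 0 ≤ α) (hB : B.HasEigenDecomp β) (hβ : Antitone β)
    (hβe : ∀ k ≤ p, ∑ i ∈ range k, padZero β i ≤ ∑ i ∈ range k, e i) :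
    (A * B).trace ≤ ∑ i ∈ range p, padZero α i * e i :=
  calc (A * B).trace ≤ ∑ i, α i * β i := hA.trace_mul_le_sum_mul hB (hα.monovary hβ)
    _ = ∑ i ∈ range p, padZero α i * padZero β i := sum_univ_mul_eq_sum_range_padZero α β
    _ ≤ ∑ i ∈ range p, padZero α i * e i :=
      sum_range_mul_le_of_partialSums_le (antitone_padZero hα hα0) (padZero_nonneg hα0) hβe

lemma trace_conj_indicatorLT_mul_le (h : M.HasEigenDecomp μ) (hμ : Antitone μ)
    {V : Matrix (Fin p) (Fin p) ℝ} (hV : V ∈ orthogonalGroup (Fin p) ℝ) (k : ℕ) :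
    (V * diagonal (indicatorLT p k) * Vᵀ * M).trace ≤ ∑ i ∈ range (min p k), padZero μ i := by
  rw [← sum_indicatorLT_mul]
  exact HasEigenDecomp.trace_mul_le_sum_mul ⟨V, hV, rfl⟩ h ((antitone_indicatorLT p k).monovary hμ)

end HasEigenDecomp

lemma trace_conj_indicatorLT_mul_conj_eq {V : Matrix (Fin p) (Fin p) ℝ}
    (hV : V ∈ orthogonalGroup (Fin p) ℝ) (μ : Fin p → ℝ) (k : ℕ) :
    (V * diagonal (indicatorLT p k) * Vᵀ * (V * diagonal μ * Vᵀ)).trace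
      = ∑ i ∈ range (min p k), padZero μ i := by
  rw [trace_conj_diagonal_mul_conj_diagonal hV, (mem_orthogonalGroup_iff' _ _).1 hV,
    ← sum_indicatorLT_mul]
  simp [dotProduct, hadamard, mulVec, one_apply]

end

section

variable {m n : ℕ} {Δ : Matrix (Fin m) (Fin n) ℝ} {d : Fin n → ℝ}

theorem partialSums_transpose_mul_mul_le {P : Matrix (Fin m) (Fin m) ℝ} {π : Fin m → ℝ}
    {γ : Fin n → ℝ} (hP : P.HasEigenDecomp π) (hπ : π ≤ 1) (hD : (Δᵀ * Δ).HasEigenDecomp d)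
    (hd : Antitone d) (hC : (Δᵀ * P * Δ).HasEigenDecomp γ) {j : ℕ} (hj : j ≤ n) :
    ∑ i ∈ range j, padZero γ i ≤ ∑ i ∈ range j, padZero d i := by
  obtain ⟨W, hW, hCW⟩ := hC
  have hQ : (W * diagonal (indicatorLT n j) * Wᵀ).HasEigenDecomp (indicatorLT n j) := ⟨W, hW, rfl⟩
  have hgap : (Δᵀ * (1 - P) * Δ).PosSemidef := by
    simpa [conjTranspose_eq_transpose_of_trivial] using
      ((hP.one_sub).posSemidef (sub_nonneg.2 hπ)).conjTranspose_mul_mul_same Δ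
  have hsplit : Δᵀ * Δ = Δᵀ * P * Δ + Δᵀ * (1 - P) * Δ := by
    rw [Matrix.mul_sub, Matrix.sub_mul, Matrix.mul_one, add_sub_cancel]
  rw [← min_eq_right hj, ← trace_conj_indicatorLT_mul_conj_eq hW, ← hCW]
  calc (W * diagonal (indicatorLT n j) * Wᵀ * (Δᵀ * P * Δ)).trace
      ≤ (W * diagonal (indicatorLT n j) * Wᵀ * (Δᵀ * Δ)).trace := by
        rw [hsplit, Matrix.mul_add, trace_add]
        linarith [hQ.trace_mul_nonneg (indicatorLT_nonneg n j) hgap]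
    _ ≤ ∑ i ∈ range (min n j), padZero d i := hD.trace_conj_indicatorLT_mul_le hd hW j

theorem partialSums_mul_mul_transpose_le {G : Matrix (Fin n) (Fin n) ℝ} {y : Fin n → ℝ}
    {β : Fin m → ℝ} (hG : G.HasEigenDecomp y) (hy : Antitone y) (hy0 : 0 ≤ y)
    (hD : (Δᵀ * Δ).HasEigenDecomp d) (hd : Antitone d) (hB : (Δ * G * Δᵀ).HasEigenDecomp β)
    {k : ℕ} (hk : k ≤ m) :
    ∑ i ∈ range k, padZero β i ≤ ∑ i ∈ range k, padZero d i * padZero y i := by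
  obtain ⟨V, hV, hBV⟩ := hB
  set P := V * diagonal (indicatorLT m k) * Vᵀ
  have hP : P.HasEigenDecomp (indicatorLT m k) := ⟨V, hV, rfl⟩
  obtain ⟨γ, hγ, hγ0, hC⟩ : ∃ γ, Antitone γ ∧ 0 ≤ γ ∧ (Δᵀ * P * Δ).HasEigenDecomp γ := by
    refine PosSemidef.exists_hasEigenDecomp_antitone ?_
    simpa [conjTranspose_eq_transpose_of_trivial] using
      (hP.posSemidef (indicatorLT_nonneg m k)).conjTranspose_mul_mul_same Δ
  have hrank : (Δᵀ * P * Δ).rank ≤ k :=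
    calc (Δᵀ * P * Δ).rank ≤ P.rank := (rank_mul_le_left _ _).trans (rank_mul_le_right _ _)
      _ ≤ k := hP.rank_eq_card ▸ card_indicatorLT_ne_zero_le m k
  have hγd : ∀ j ≤ n,
      ∑ i ∈ range j, padZero γ i ≤ ∑ i ∈ range j, if i < k then padZero d i else 0 := by
    intro j hj
    have htail : ∑ i ∈ range j, padZero γ i = ∑ i ∈ range (min j k), padZero γ i := by
      refine (sum_subset (range_mono (min_le_left j k)) fun i hij hik => ?_).symm
      have hki : k ≤ i := by simp_all
      by_cases hin : i < n
      · rw [padZero_of_lt hin]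
        exact hC.eq_zero_of_rank_le hγ hγ0 hrank hki
      · exact padZero_of_le (not_lt.1 hin)
    rw [htail, sum_range_ite_lt]
    exact partialSums_transpose_mul_mul_le hP (indicatorLT_le_one m k) hD hd hC
      ((min_le_left j k).trans hj)
  calc ∑ i ∈ range k, padZero β i = (P * (Δ * G * Δᵀ)).trace := by
        rw [hBV, trace_conj_indicatorLT_mul_conj_eq hV, min_eq_right hk]
    _ = (G * (Δᵀ * P * Δ)).trace := by
        rw [trace_mul_comm G]
        simp only [P, ← Matrix.mul_assoc]
        rw [trace_mul_comm _ Δᵀ]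
        simp only [Matrix.mul_assoc]
    _ ≤ ∑ i ∈ range n, padZero y i * if i < k then padZero d i else 0 :=
        hG.trace_mul_le_of_partialSums_le hy hy0 hC hγ hγd
    _ = ∑ i ∈ range k, padZero d i * padZero y i := by
        rw [sum_range_padZero_mul_eq_min d (padZero y) k, min_comm, ← sum_range_ite_lt]
        exact sum_congr rfl fun i _ => by split_ifs <;> ring

theorem trace_mul_mul_mul_transpose_le {A : Matrix (Fin m) (Fin m) ℝ}
    {G : Matrix (Fin n) (Fin n) ℝ} {x : Fin m → ℝ} {y : Fin n → ℝ}
    (hA : A.HasEigenDecomp x) (hx : Antitone x) (hx0 : 0 ≤ x)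
    (hG : G.HasEigenDecomp y) (hy : Antitone y) (hy0 : 0 ≤ y)
    (hD : (Δᵀ * Δ).HasEigenDecomp d) (hd : Antitone d) :
    (A * (Δ * G * Δᵀ)).trace ≤
      ∑ i ∈ range (min m n), padZero x i * padZero d i * padZero y i := by
  obtain ⟨β, hβ, -, hB⟩ : ∃ β, Antitone β ∧ 0 ≤ β ∧ (Δ * G * Δᵀ).HasEigenDecomp β := by
    refine PosSemidef.exists_hasEigenDecomp_antitone ?_
    simpa [conjTranspose_eq_transpose_of_trivial] using
      (hG.posSemidef hy0).mul_mul_conjTranspose_same Δ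
  calc (A * (Δ * G * Δᵀ)).trace ≤ ∑ i ∈ range m, padZero x i * (padZero d i * padZero y i) :=
        hA.trace_mul_le_of_partialSums_le hx hx0 hB hβ
          fun k hk => partialSums_mul_mul_transpose_le hG hy hy0 hD hd hB hk
    _ = ∑ i ∈ range (min m n), padZero d i * (padZero x i * padZero y i) := by
        rw [← sum_range_padZero_mul_eq_min]
        exact sum_congr rfl fun i _ => by ring
    _ = ∑ i ∈ range (min m n), padZero x i * padZero d i * padZero y i :=
        sum_congr rfl fun i _ => by ring

end

end Matrix

namespace IsSVals

variable {m n : ℕ} {M : Matrix (Fin m) (Fin n) ℝ} {σ : Fin n → ℝ}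

lemma nonneg (h : IsSVals M σ) : 0 ≤ σ := by
  obtain ⟨-, e, rfl⟩ := h
  exact fun i => Real.sqrt_nonneg _

lemma antitone_sq (h : IsSVals M σ) : Antitone fun i => σ i ^ 2 :=
  fun _ _ hij => pow_le_pow_left₀ (h.nonneg _) (h.1 hij) 2

lemma hasEigenDecomp_of_charpoly_eq (h : IsSVals M σ) {N : Matrix (Fin n) (Fin n) ℝ}
    (hN : N.IsHermitian) (hcp : N.charpoly = (Mᵀ * M).charpoly) :
    N.HasEigenDecomp fun i => σ i ^ 2 := by
  obtain ⟨-, e, rfl⟩ := h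
  have hMM := posSemidef_transpose_mul_self M
  have hev : hN.eigenvalues = hMM.1.eigenvalues :=
    (hN.eigenvalues_eq_eigenvalues_iff hMM.1).2 hcp
  convert hN.hasEigenDecomp.comp_perm e using 1
  funext i
  simp [sv, hev, Real.sq_sqrt (hMM.eigenvalues_nonneg _)]

lemma hasEigenDecomp_transpose_mul (h : IsSVals M σ) :
    (Mᵀ * M).HasEigenDecomp fun i => σ i ^ 2 :=
  h.hasEigenDecomp_of_charpoly_eq (posSemidef_transpose_mul_self M).1 rfl

variable {U : Matrix (Fin n) (Fin n) ℝ}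

lemma pos_of_isUnit (h : IsSVals U σ) (hU : IsUnit U) (i : Fin n) : 0 < σ i := by
  obtain ⟨-, e, rfl⟩ := h
  have hUU : (Uᵀ * U).PosDef :=
    (posSemidef_transpose_mul_self U).posDef_iff_isUnit.2 ((isUnit_transpose U).2 hU |>.mul hU)
  exact Real.sqrt_pos.2 (hUU.eigenvalues_pos (e i))

lemma hasEigenDecomp_inv_mul_transpose (h : IsSVals U σ) (hU : IsUnit U) :
    (U * Uᵀ)⁻¹.HasEigenDecomp fun i : Fin n => (σ i.rev ^ 2)⁻¹ := by
  have hUU : (U * Uᵀ).IsHermitian := by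
    simpa [conjTranspose_eq_transpose_of_trivial] using isHermitian_mul_conjTranspose_self U
  exact ((h.hasEigenDecomp_of_charpoly_eq hUU (charpoly_mul_comm _ _)).inv
    fun i => pow_ne_zero 2 (h.pos_of_isUnit hU i).ne').comp_perm Fin.revPerm

lemma antitone_inv_sq_rev (h : IsSVals U σ) (hU : IsUnit U) :
    Antitone fun i : Fin n => (σ i.rev ^ 2)⁻¹ :=
  fun _ _ hij => inv_anti₀ (pow_pos (h.pos_of_isUnit hU _) 2) (h.antitone_sq (Fin.rev_le_rev.2 hij))

end IsSVals

lemma frob_sq {m n : ℕ} (M : Matrix (Fin m) (Fin n) ℝ) : frob M ^ 2 = (M * Mᵀ).trace := by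
  rw [frob, Real.sq_sqrt (by positivity)]
  simp [trace, mul_apply, sq]

lemma frob_mul_mul_sq {k m n l : ℕ} (X : Matrix (Fin k) (Fin m) ℝ) (Δ : Matrix (Fin m) (Fin n) ℝ)
    (Y : Matrix (Fin n) (Fin l) ℝ) :
    frob (X * Δ * Y) ^ 2 = (Xᵀ * X * (Δ * (Y * Yᵀ) * Δᵀ)).trace := by
  have h : X * Δ * Y * (X * Δ * Y)ᵀ = X * (Δ * (Y * Yᵀ) * Δᵀ) * Xᵀ := by
    simp only [transpose_mul, Matrix.mul_assoc]
  rw [frob_sq, h, trace_mul_cycle]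

theorem stmt4 (m n : ℕ) (Δ : Matrix (Fin m) (Fin n) ℝ)
    (U₁ : Matrix (Fin m) (Fin m) ℝ) (U₂ : Matrix (Fin n) (Fin n) ℝ)
    (hU₁ : IsUnit U₁) (hU₂ : IsUnit U₂)
    (σΔ : Fin n → ℝ) (σ₁ : Fin m → ℝ) (σ₂ : Fin n → ℝ)
    (hΔ : IsSVals Δ σΔ) (h1 : IsSVals U₁ σ₁) (h2 : IsSVals U₂ σ₂) :
    (frob (U₁⁻¹ * Δ * (U₂⁻¹)ᵀ))^2 ≤
      ∑ i : Fin (min m n),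
        (σΔ (Fin.castLE (min_le_right m n) i))^2 /
          ((σ₁ ((Fin.castLE (min_le_left m n) i).rev))^2 *
           (σ₂ ((Fin.castLE (min_le_right m n) i).rev))^2) := by
  have hX : (U₁⁻¹)ᵀ * U₁⁻¹ = (U₁ * U₁ᵀ)⁻¹ := by rw [Matrix.mul_inv_rev, transpose_nonsing_inv]
  have hY : (U₂⁻¹)ᵀ * (U₂⁻¹)ᵀᵀ = (U₂ * U₂ᵀ)⁻¹ := by
    rw [transpose_transpose, Matrix.mul_inv_rev, transpose_nonsing_inv]
  rw [frob_mul_mul_sq, hX, hY]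
  refine (trace_mul_mul_mul_transpose_le (h1.hasEigenDecomp_inv_mul_transpose hU₁)
    (h1.antitone_inv_sq_rev hU₁) (fun i => by positivity)
    (h2.hasEigenDecomp_inv_mul_transpose hU₂) (h2.antitone_inv_sq_rev hU₂)
    (fun i => by positivity) hΔ.hasEigenDecomp_transpose_mul
    hΔ.antitone_sq).trans_eq ?_
  rw [← Fin.sum_univ_eq_sum_range (fun i => padZero _ i * padZero _ i * padZero _ i)]
  refine sum_congr rfl fun i _ => ?_
  rw [padZero_castLE _ (min_le_left m n), padZero_castLE _ (min_le_right m n),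
    padZero_castLE _ (min_le_right m n), div_eq_mul_inv, mul_inv]
  ring
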